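/- For all l, m ∈ ℕ, the number of proper colorings of the complete bipartite graph K_{2,l} using colors from {1,...,m} equals m(m−1)^l + m(m−1)(m−2)^l; that is, P(K_{2,l}, m) = m(m−1)^l + m(m−1)(m−2)^l. -/
import Mathlib


/-- A proper coloring of the graph `G` from the list assignment `L` (colors are
natural numbers): every vertex gets a color from its list, and adjacent vertices
get different colors. -/
def IsProperListColoring {V : Type*} (G : SimpleGraph V) (L : V → Finset ℕ) (f : V → ℕ) : Prop :=
  (∀ v, f v ∈ L v) ∧ ∀ ⦃u w⦄, G.Adj u w → f u ≠ f w

/-- `P(G, L)`: the number of proper `L`-colorings of `G`. -/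
noncomputable def numListColorings {V : Type*} (G : SimpleGraph V) (L : V → Finset ℕ) : ℕ :=
  {f : V → ℕ | IsProperListColoring G L f}.ncard

/-- `P(G, m)`: the chromatic polynomial of `G` evaluated at `m`, i.e. the number of
proper colorings of `G` using colors from `{1, …, m}`. -/
noncomputable def chromPoly {V : Type*} (G : SimpleGraph V) (m : ℕ) : ℕ :=
  numListColorings G fun _ => Finset.Icc 1 m

/-- `L` is an `m`-assignment: every list has size `m`. -/
def IsAssignment {V : Type*} (L : V → Finset ℕ) (m : ℕ) : Prop :=
  ∀ v, (L v).card = m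

/-- `P_ℓ(G, m)`: the list color function, the minimum of `P(G, L)` over all
`m`-assignments `L` for `G`. -/
noncomputable def listColorFunction {V : Type*} (G : SimpleGraph V) (m : ℕ) : ℕ :=
  sInf {p | ∃ L : V → Finset ℕ, IsAssignment L m ∧ numListColorings G L = p}

/-- `χ(G)`: the chromatic number, the least `m` admitting a proper coloring with
colors from `{1, …, m}`. -/
noncomputable def chromNum {V : Type*} (G : SimpleGraph V) : ℕ :=
  sInf {m | 0 < chromPoly G m}

/-- `χ_ℓ(G)`: the list chromatic number, the least `k` such that `G` has a proper
`L`-coloring for every `k`-assignment `L`. -/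
noncomputable def listChromNum {V : Type*} (G : SimpleGraph V) : ℕ :=
  sInf {k | ∀ L : V → Finset ℕ, IsAssignment L k → ∃ f, IsProperListColoring G L f}

/-- `τ(G)`: the list color function threshold, the least `k ≥ χ(G)` such that
`P_ℓ(G, m) = P(G, m)` whenever `m ≥ k`. -/
noncomputable def lcfThreshold {V : Type*} (G : SimpleGraph V) : ℕ :=
  sInf {k | chromNum G ≤ k ∧ ∀ m, k ≤ m → listColorFunction G m = chromPoly G m}

/-- The complete bipartite graph `K_{2,l}`. -/
def K2l (l : ℕ) : SimpleGraph (Fin 2 ⊕ Fin l) := completeBipartiteGraph (Fin 2) (Fin l)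

open Finset in
/-- ℕ-valued count for `K_{2,l}`. -/
theorem chromPoly_K2l_nat (l m : ℕ) :
    chromPoly (K2l l) m = m * ((m - 1) ^ l + (m - 1) * (m - 2) ^ l) := by
  classical
  set A : Finset ℕ := Finset.Icc 1 m with hA
  have hAcard : A.card = m := by simp [hA]
  -- the set of proper colorings as a Finset
  set F : Finset (Fin 2 ⊕ Fin l → ℕ) :=
    (Fintype.piFinset fun _ => A).filter
      (fun f => ∀ (i : Fin 2) (j : Fin l), f (Sum.inl i) ≠ f (Sum.inr j)) with hF
  have hset : {f : Fin 2 ⊕ Fin l → ℕ | IsProperListColoring (K2l l) (fun _ => A) f} = ↑F := by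
    ext f
    simp only [Set.mem_setOf_eq, hF, Finset.coe_filter, Fintype.mem_piFinset,
      Set.mem_setOf_eq, IsProperListColoring]
    constructor
    · rintro ⟨h1, h2⟩
      exact ⟨h1, fun i j => h2 (by simp [K2l])⟩
    · rintro ⟨h1, h2⟩
      refine ⟨h1, ?_⟩
      rintro (i | j) (i' | j') hadj <;> simp [K2l] at hadj
      · exact h2 i j'
      · exact (h2 i' j).symm
  have hchrom : chromPoly (K2l l) m = F.card := by
    rw [chromPoly, numListColorings, ← hA, hset, Set.ncard_coe_finset]
  -- bijection with (pair of colors for the left side, coloring of the right side)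
  set T : Finset ((_ : ℕ × ℕ) × (Fin l → ℕ)) :=
    (A ×ˢ A).sigma (fun p => Fintype.piFinset fun _ : Fin l => A \ {p.1, p.2}) with hT
  have hcard : F.card = T.card := by
    refine Finset.card_bij'
      (fun f _ => ⟨(f (Sum.inl 0), f (Sum.inl 1)), fun j => f (Sum.inr j)⟩)
      (fun x _ => Sum.elim ![x.1.1, x.1.2] x.2) ?_ ?_ ?_ ?_
    · intro f hf
      simp only [hF, Finset.mem_filter, Fintype.mem_piFinset] at hf
      obtain ⟨h1, h2⟩ := hf
      simp only [hT, Finset.mem_sigma, Finset.mem_product, Fintype.mem_piFinset,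
        Finset.mem_sdiff, Finset.mem_insert, Finset.mem_singleton]
      refine ⟨⟨h1 _, h1 _⟩, fun j => ⟨h1 _, ?_⟩⟩
      push_neg
      exact ⟨fun h => h2 0 j h.symm, fun h => h2 1 j h.symm⟩
    · rintro ⟨⟨a, b⟩, g⟩ hx
      simp only [hT, Finset.mem_sigma, Finset.mem_product, Fintype.mem_piFinset,
        Finset.mem_sdiff, Finset.mem_insert, Finset.mem_singleton] at hx
      obtain ⟨⟨ha, hb⟩, hg⟩ := hx
      simp only [hF, Finset.mem_filter, Fintype.mem_piFinset]
      constructor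
      · rintro (i | j)
        · fin_cases i <;> simpa
        · exact (hg j).1
      · intro i j
        have := (hg j).2
        push_neg at this
        fin_cases i
        · simpa using fun h => this.1 h.symm
        · simpa using fun h => this.2 h.symm
    · intro f hf
      funext v
      rcases v with i | j
      · fin_cases i <;> rfl
      · rfl
    · rintro ⟨⟨a, b⟩, g⟩ hx
      rfl
  have hTcard : T.card = ∑ a ∈ A, ∑ b ∈ A, (A \ {a, b}).card ^ l := by
    rw [hT, Finset.card_sigma, Finset.sum_product]
    refine Finset.sum_congr rfl fun a _ => Finset.sum_congr rfl fun b _ => ?_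
    rw [Fintype.card_piFinset]
    simp
  have hinner : ∀ a ∈ A, ∑ b ∈ A, (A \ {a, b}).card ^ l
      = (m - 1) ^ l + (m - 1) * (m - 2) ^ l := by
    intro a ha
    rw [← Finset.add_sum_erase _ _ ha]
    have hpair : ({a, a} : Finset ℕ) = {a} := by simp
    have h1 : (A \ {a, a}).card = m - 1 := by
      rw [hpair, Finset.card_sdiff_of_subset (by simpa using ha)]
      simp [hAcard]
    have h2 : ∑ b ∈ A.erase a, (A \ {a, b}).card ^ l = (m - 1) * (m - 2) ^ l := by
      rw [Finset.sum_congr rfl (fun b hb => ?_), Finset.sum_const, smul_eq_mul,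
        Finset.card_erase_of_mem ha, hAcard]
      have hb' := Finset.mem_erase.mp hb
      have hsub : ({a, b} : Finset ℕ) ⊆ A := by
        intro x hx
        rcases Finset.mem_insert.mp hx with rfl | hx
        · exact ha
        · rw [Finset.mem_singleton.mp hx]; exact hb'.2
      rw [Finset.card_sdiff_of_subset hsub, Finset.card_pair (Ne.symm hb'.1), hAcard]
    rw [h1, h2]
  rw [hchrom, hcard, hTcard, Finset.sum_congr rfl hinner, Finset.sum_const, smul_eq_mul, hAcard]

/-- For all `l, m ∈ ℕ`, `P(K_{2,l}, m) = m(m-1)^l + m(m-1)(m-2)^l`. -/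
theorem chromPoly_K2l (l m : ℕ) :
    (chromPoly (K2l l) m : ℤ) =
      (m : ℤ) * ((m : ℤ) - 1) ^ l + (m : ℤ) * ((m : ℤ) - 1) * ((m : ℤ) - 2) ^ l := by
  rw [chromPoly_K2l_nat]
  match m with
  | 0 => simp
  | 1 => simp
  | (k + 2) =>
    have h1 : k + 2 - 1 = k + 1 := rfl
    have h2 : k + 2 - 2 = k := rfl
    rw [h1, h2]
    push_cast
    ring
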